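/- arXiv:2208.02898 — 6 statements merged into one kernel-verified Lean document; each statement's English description precedes it below -/
import Mathlib

section
/- For all integers m ≥ 0 and n ≥ 0, the unsigned Stirling number of the first kind [m choose m-n] (Stirling cycle number) equals the sum over all k of ⟨⟨n,k⟩⟩ · C(m+k, 2n), where ⟨⟨n,k⟩⟩ are the second-order Eulerian numbers. -/
/-- Second-order Eulerian numbers. -/
def eulerian2 : ℕ → ℤ → ℚ
  | 0, k => if k = 0 then 1 else 0
  | n+1, k => ((k : ℚ) + 1) * eulerian2 n k + (2 * (n : ℚ) + 1 - (k : ℚ)) * eulerian2 n (k - 1)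

/-- Stirling cycle numbers: [0,k] = δ_{k,0}, [n+1,k] = [n,k-1] + n·[n,k]. -/
def stirCycle : ℕ → ℤ → ℚ
  | 0, k => if k = 0 then 1 else 0
  | n+1, k => stirCycle n (k - 1) + (n : ℚ) * stirCycle n k

/-!
Both sides satisfy `f (m+1) (n+1) = f m (n+1) + m * f m n` with the same boundary values.
For the right side, Pascal's rule reduces this to
`∑ ⟨⟨n+1,k⟩⟩ C(m+k, 2n+1) = m ∑ ⟨⟨n,k⟩⟩ C(m+k, 2n)`; moving the Eulerian recurrence onto the
binomial factor (an index shift, using `⟨⟨n,-1⟩⟩ = ⟨⟨n,n+1⟩⟩ = 0`) turns this into the termwise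
identity `(k+1) C(a, s+1) + (s-k) C(a+1, s+1) = (a-k) C(a, s)` with `a = m+k`, `s = 2n`.
-/

lemma eulerian2_of_neg : ∀ (n : ℕ) {k : ℤ}, k < 0 → eulerian2 n k = 0
  | 0, k, hk => by rw [eulerian2, if_neg hk.ne]
  | n + 1, k, hk => by
    rw [eulerian2, eulerian2_of_neg n hk, eulerian2_of_neg n (by omega : k - 1 < 0)]
    ring

lemma eulerian2_of_lt : ∀ (n : ℕ) {k : ℤ}, n < k → eulerian2 n k = 0
  | 0, k, hk => by rw [eulerian2, if_neg (by omega)]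
  | n + 1, k, hk => by
    rw [eulerian2, eulerian2_of_lt n (by omega : (n : ℤ) < k),
      eulerian2_of_lt n (by omega : (n : ℤ) < k - 1)]
    ring

lemma stirCycle_of_lt : ∀ (n : ℕ) {k : ℤ}, n < k → stirCycle n k = 0
  | 0, k, hk => by rw [stirCycle, if_neg (by omega)]
  | n + 1, k, hk => by
    rw [stirCycle, stirCycle_of_lt n (by omega : (n : ℤ) < k - 1),
      stirCycle_of_lt n (by omega : (n : ℤ) < k)]
    ring

lemma stirCycle_self : ∀ n : ℕ, stirCycle n n = 1
  | 0 => rfl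
  | n + 1 => by
    rw [stirCycle, Nat.cast_succ, add_sub_cancel_right, stirCycle_self n,
      stirCycle_of_lt n (by omega)]
    ring

lemma stirCycle_succ_sub_succ (m n : ℕ) :
    stirCycle (m + 1) ((m + 1 : ℕ) - (n + 1 : ℕ))
      = stirCycle m ((m : ℤ) - (n + 1 : ℕ)) + m * stirCycle m ((m : ℤ) - n) := by
  rw [stirCycle, show ((m + 1 : ℕ) : ℤ) - (n + 1 : ℕ) - 1 = (m : ℤ) - (n + 1 : ℕ) by omega,
    show ((m + 1 : ℕ) : ℤ) - (n + 1 : ℕ) = (m : ℤ) - n by omega]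

lemma sum_eulerian2_succ_mul (n : ℕ) (g : ℕ → ℚ) :
    ∑ k ∈ Finset.range (n + 2), eulerian2 (n + 1) k * g k
      = ∑ k ∈ Finset.range (n + 1),
          eulerian2 n k * ((k + 1) * g k + (2 * n - k) * g (k + 1)) := by
  have recurrence (k : ℕ) : eulerian2 (n + 1) k
      = (k + 1) * eulerian2 n k + (2 * n + 1 - k) * eulerian2 n (k - 1) := by
    rw [eulerian2, Int.cast_natCast]
  calc ∑ k ∈ Finset.range (n + 2), eulerian2 (n + 1) k * g k
      = ∑ k ∈ Finset.range (n + 2), (k + 1) * eulerian2 n k * g k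
          + ∑ k ∈ Finset.range (n + 2), (2 * n + 1 - k) * eulerian2 n (k - 1) * g k := by
        simp only [recurrence, add_mul, Finset.sum_add_distrib]
    _ = ∑ k ∈ Finset.range (n + 1), (k + 1) * eulerian2 n k * g k
          + ∑ k ∈ Finset.range (n + 1), (2 * n - k) * eulerian2 n k * g (k + 1) := by
        congr 1
        · rw [Finset.sum_range_succ, eulerian2_of_lt n (by omega), mul_zero, zero_mul, add_zero]
        · rw [Finset.sum_range_succ', eulerian2_of_neg n (by omega : ((0 : ℕ) : ℤ) - 1 < 0),
            mul_zero, zero_mul, add_zero]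
          refine Finset.sum_congr rfl fun k _ => ?_
          push_cast
          rw [add_sub_cancel_right]
          ring
    _ = _ := by
        rw [← Finset.sum_add_distrib]
        exact Finset.sum_congr rfl fun k _ => by ring

lemma add_one_mul_choose_add_sub_mul_choose {R : Type*} [CommRing R] (a s : ℕ) (x : R) :
    (x + 1) * ((a.choose (s + 1) : ℕ) : R) + (s - x) * (((a + 1).choose (s + 1) : ℕ) : R)
      = (a - x) * ((a.choose s : ℕ) : R) := by
  have pascal : (((a + 1).choose (s + 1) : ℕ) : R) = a.choose s + a.choose (s + 1) := by
    rw [Nat.choose_succ_succ, Nat.cast_add]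
  have absorb := congrArg (Nat.cast : ℕ → R) (Nat.add_one_mul_choose_eq a s)
  push_cast at absorb
  linear_combination (-x - 1) * pascal - absorb

lemma sum_eulerian2_mul_choose_succ (m n : ℕ) :
    ∑ k ∈ Finset.range (n + 2), eulerian2 (n + 1) k * ((m + 1 + k).choose (2 * (n + 1)) : ℚ)
      = ∑ k ∈ Finset.range (n + 2), eulerian2 (n + 1) k * ((m + k).choose (2 * (n + 1)) : ℚ)
        + m * ∑ k ∈ Finset.range (n + 1), eulerian2 n k * ((m + k).choose (2 * n) : ℚ) := by
  have pascal (k : ℕ) : eulerian2 (n + 1) k * ((m + 1 + k).choose (2 * (n + 1)) : ℚ)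
      = eulerian2 (n + 1) k * (m + k).choose (2 * (n + 1))
        + eulerian2 (n + 1) k * (m + k).choose (2 * n + 1) := by
    rw [add_right_comm, Nat.mul_succ, Nat.choose_succ_succ, Nat.cast_add, mul_add, add_comm]
  have termwise (k : ℕ) : (k + 1 : ℚ) * ((m + k).choose (2 * n + 1) : ℕ)
      + (2 * n - k) * ((m + k + 1).choose (2 * n + 1) : ℕ) = m * (m + k).choose (2 * n) := by
    have := add_one_mul_choose_add_sub_mul_choose (m + k) (2 * n) (k : ℚ)
    push_cast at this ⊢
    linear_combination this
  simp only [pascal, Finset.sum_add_distrib, add_right_inj]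
  rw [sum_eulerian2_succ_mul n fun k => ((m + k).choose (2 * n + 1) : ℚ), Finset.mul_sum]
  refine Finset.sum_congr rfl fun k _ => ?_
  rw [← add_assoc, termwise]
  ring

theorem stmt1 (m n : ℕ) :
    stirCycle m ((m : ℤ) - n)
      = ∑ k ∈ Finset.range (n + 1), eulerian2 n k * (Nat.choose (m + k) (2 * n) : ℚ) := by
  induction m generalizing n with
  | zero =>
    cases n with
    | zero => simp [stirCycle, eulerian2]
    | succ n =>
      rw [stirCycle, if_neg (by omega)]
      refine (Finset.sum_eq_zero fun k hk => ?_).symm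
      have hk : k < n + 2 := Finset.mem_range.mp hk
      rw [Nat.choose_eq_zero_of_lt (by omega), Nat.cast_zero, mul_zero]
  | succ m ih =>
    cases n with
    | zero =>
      rw [Nat.cast_zero, sub_zero, stirCycle_self]
      simp [eulerian2]
    | succ n => rw [stirCycle_succ_sub_succ, ih, ih, sum_eulerian2_mul_choose_succ]
end

section
/- For all integers m ≥ 1 and n ≥ 1, the modified Stirling cycle number [m choose m-n]* equals the sum over all k of ⟨⟨n,k⟩⟩* · C(m+k, 2n), where ⟨⟨n,k⟩⟩* are the modified second-order Eulerian numbers. -/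
/-!
Put `T n x = ∑ k, ⟨⟨n,k⟩⟩* · choose (x + k) (2n)` (`eulerianChooseSum`), with the binomial
coefficient taken as the polynomial `Ring.choose` in `x`, so that Pascal's rule and absorption
hold without sign conditions. The Eulerian recurrence, Pascal's rule and absorption give
`T (n+1) (x+1) = T (n+1) x + x · T n x`, the recurrence of `[m, m-n]*` in `m`, and
`T 1 (x+1) = T 1 x + (x - 1)` matches `m · [m, m]* = m - 1`. Since `T n 1 = 0 = [1, 1-n]*`,
induction on `m` gives `[m, m-n]* = T n m`.
-/

open Finset

namespace Ring

variable {R : Type*} [CommRing R] [BinomialRing R]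

theorem choose_succ_right_eq (r : R) (k : ℕ) :
    choose r (k + 1) * (k + 1) = choose r k * (r - k) := by
  have h := choose_smul_choose r (Nat.le_add_right k 1)
  rw [Nat.choose_succ_self_right, Nat.add_sub_cancel_left, choose_one_right, nsmul_eq_mul] at h
  push_cast at h
  rw [mul_comm, h]

theorem add_one_mul_choose_add_sub_mul_choose_add_one (x y : R) (k : ℕ) :
    (y + 1) * choose (x + y) (k + 1) + (k - y) * choose (x + y + 1) (k + 1)
      = x * choose (x + y) k := by
  rw [choose_succ_succ]
  linear_combination choose_succ_right_eq (x + y) k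

theorem choose_intCast_of_nonneg {a : ℤ} (ha : 0 ≤ a) (k : ℕ) :
    choose (a : R) k = (a.toNat.choose k : R) := by
  lift a to ℕ using ha
  simpa using choose_natCast (R := R) a k

end Ring

structure IsModifiedEulerian (E : ℕ → ℤ → ℚ) : Prop where
  one : ∀ k : ℤ, E 1 k = if k = -1 then 1 else 0
  succ : ∀ n : ℕ, 1 ≤ n → ∀ k : ℤ,
    E (n + 1) k = ((k : ℚ) + 1) * E n k + (2 * (n : ℚ) + 1 - (k : ℚ)) * E n (k - 1)

noncomputable def eulerianChooseSum (E : ℕ → ℤ → ℚ) (n : ℕ) (x : ℚ) : ℚ :=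
  ∑ k ∈ Icc (-1 : ℤ) ((n : ℤ) - 2), E n k * Ring.choose (x + k) (2 * n)

theorem eulerianChooseSum_one_right (E : ℕ → ℤ → ℚ) (n : ℕ) :
    eulerianChooseSum E n 1 = 0 := by
  refine sum_eq_zero fun k hk => ?_
  rw [mem_Icc] at hk
  have h : (1 : ℚ) + k = ((1 + k : ℤ) : ℚ) := by push_cast; ring
  rw [h, Ring.choose_intCast_of_nonneg (by omega), Nat.choose_eq_zero_of_lt (by omega),
    Nat.cast_zero, mul_zero]

namespace IsModifiedEulerian

variable {E : ℕ → ℤ → ℚ}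

theorem eq_zero_of_notMem_Icc (hE : IsModifiedEulerian E) {n : ℕ} (hn : 1 ≤ n) {k : ℤ}
    (hk : k ∉ Icc (-1 : ℤ) ((n : ℤ) - 2)) : E n k = 0 := by
  induction n, hn using Nat.le_induction generalizing k with
  | base =>
    rw [hE.one, if_neg]
    rintro rfl
    simp at hk
  | succ n hn ih =>
    simp only [mem_Icc, not_and_or, not_le] at hk ih
    push_cast at hk
    rw [hE.succ n hn, ih (by omega), ih (by omega), mul_zero, mul_zero, add_zero]

theorem sum_eq_of_Icc_subset (hE : IsModifiedEulerian E) {n : ℕ} (hn : 1 ≤ n) {s : Finset ℤ}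
    (hs : Icc (-1 : ℤ) ((n : ℤ) - 2) ⊆ s) (g : ℤ → ℚ) :
    ∑ k ∈ s, E n k * g k = ∑ k ∈ Icc (-1 : ℤ) ((n : ℤ) - 2), E n k * g k :=
  (sum_subset hs fun _ _ hk => by rw [hE.eq_zero_of_notMem_Icc hn hk, zero_mul]).symm

theorem eulerianChooseSum_one_add_one (hE : IsModifiedEulerian E) (x : ℚ) :
    eulerianChooseSum E 1 (x + 1) = eulerianChooseSum E 1 x + (x - 1) := by
  have hT (y : ℚ) : eulerianChooseSum E 1 y = Ring.choose (y - 1) 2 := by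
    simp [eulerianChooseSum, hE.one, sub_eq_add_neg]
  have hpascal := Ring.choose_succ_succ (x - 1) 1
  rw [sub_add_cancel, Ring.choose_one_right] at hpascal
  rw [hT, hT, add_sub_cancel_right, hpascal]
  ring

theorem eulerianChooseSum_succ_add_one (hE : IsModifiedEulerian E) {n : ℕ} (hn : 1 ≤ n)
    (x : ℚ) : eulerianChooseSum E (n + 1) (x + 1)
      = eulerianChooseSum E (n + 1) x + x * eulerianChooseSum E n x := by
  have hshift :
      Icc (-1 : ℤ) ((n : ℤ) - 1) = (Icc (-2) ((n : ℤ) - 2)).map (addRightEmbedding 1) := by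
    rw [map_add_right_Icc]; congr 1; ring
  have hsub₁ : Icc (-1 : ℤ) ((n : ℤ) - 2) ⊆ Icc (-1) ((n : ℤ) - 1) :=
    Icc_subset_Icc le_rfl (by omega)
  have hsub₂ : Icc (-1 : ℤ) ((n : ℤ) - 2) ⊆ Icc (-2) ((n : ℤ) - 2) :=
    Icc_subset_Icc (by omega) le_rfl
  have hdiff :
      ∑ k ∈ Icc (-1 : ℤ) ((n : ℤ) - 1), E (n + 1) k * Ring.choose (x + k) (2 * n + 1)
        = x * eulerianChooseSum E n x := by
    calc _ = ∑ k ∈ Icc (-1 : ℤ) ((n : ℤ) - 1),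
              E n k * ((k + 1) * Ring.choose (x + k) (2 * n + 1))
          + ∑ k ∈ Icc (-1 : ℤ) ((n : ℤ) - 1),
              E n (k - 1) * ((2 * n + 1 - k) * Ring.choose (x + k) (2 * n + 1)) := by
          rw [← sum_add_distrib]
          refine sum_congr rfl fun k _ => ?_
          rw [hE.succ n hn]; ring
      _ = ∑ k ∈ Icc (-1 : ℤ) ((n : ℤ) - 2),
              E n k * ((k + 1) * Ring.choose (x + k) (2 * n + 1))
          + ∑ k ∈ Icc (-1 : ℤ) ((n : ℤ) - 2),
              E n k * ((2 * n - k) * Ring.choose (x + k + 1) (2 * n + 1)) := by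
          rw [hE.sum_eq_of_Icc_subset hn hsub₁, hshift, sum_map]
          congr 1
          rw [← hE.sum_eq_of_Icc_subset hn hsub₂]
          refine sum_congr rfl fun k _ => ?_
          simp only [addRightEmbedding_apply, add_sub_cancel_right]
          push_cast
          rw [← add_assoc]
          ring
      _ = x * eulerianChooseSum E n x := by
          rw [eulerianChooseSum, mul_sum, ← sum_add_distrib]
          refine sum_congr rfl fun k _ => ?_
          have h := Ring.add_one_mul_choose_add_sub_mul_choose_add_one x (k : ℚ) (2 * n)
          push_cast at h
          linear_combination E n k * h
  have hI : ((n + 1 : ℕ) : ℤ) - 2 = n - 1 := by push_cast; ring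
  rw [eulerianChooseSum, eulerianChooseSum, hI, ← hdiff, ← sum_add_distrib]
  refine sum_congr rfl fun k _ => ?_
  rw [add_right_comm, show 2 * (n + 1) = 2 * n + 1 + 1 by ring, Ring.choose_succ_succ]
  ring

end IsModifiedEulerian

theorem stmt3 (S : ℕ → ℤ → ℚ) (E : ℕ → ℤ → ℚ)
    (hSrec : ∀ (n : ℕ) (k : ℤ), S (n + 1) k = S n (k - 1) + (n : ℚ) * S n k)
    (hS0 : ∀ k : ℤ, k ≤ 0 → S 0 k = 0)
    (hSdiag : ∀ n : ℕ, 1 ≤ n → S n (n : ℤ) = ((n : ℚ) - 1) / n)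
    (hE1 : ∀ k : ℤ, E 1 k = if k = -1 then 1 else 0)
    (hErec : ∀ n : ℕ, 1 ≤ n → ∀ k : ℤ,
      E (n + 1) k = ((k : ℚ) + 1) * E n k + (2 * (n : ℚ) + 1 - (k : ℚ)) * E n (k - 1))
    (m n : ℕ) (hm : 1 ≤ m) (hn : 1 ≤ n) :
    S m ((m : ℤ) - n)
      = ∑ k ∈ Finset.Icc (-1 : ℤ) ((n : ℤ) - 2),
          E n k * (Nat.choose ((m : ℤ) + k).toNat (2 * n) : ℚ) := by
  have hE : IsModifiedEulerian E := ⟨hE1, hErec⟩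
  suffices h : S m ((m : ℤ) - n) = eulerianChooseSum E n m by
    rw [h, eulerianChooseSum]
    refine sum_congr rfl fun k hk => ?_
    rw [mem_Icc] at hk
    rw [← Ring.choose_intCast_of_nonneg (by omega), Int.cast_add, Int.cast_natCast]
  induction m, hm using Nat.le_induction generalizing n with
  | base =>
    push_cast
    rw [eulerianChooseSum_one_right, ← zero_add 1, hSrec, hS0 _ (by omega),
      hS0 _ (by omega), mul_zero, add_zero]
  | succ m hm ih =>
    obtain rfl | ⟨t, ht, rfl⟩ : n = 1 ∨ ∃ t, 1 ≤ t ∧ n = t + 1 :=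
      (eq_or_lt_of_le hn).imp Eq.symm fun h => ⟨n - 1, by omega, by omega⟩
    · have ih₁ := ih 1 le_rfl
      push_cast at ih₁ ⊢
      rw [add_sub_cancel_right, hSrec, ih₁, hSdiag m hm, mul_div_cancel₀ _ (by positivity),
        hE.eulerianChooseSum_one_add_one]
    · have ih₁ := ih (t + 1) (by omega)
      push_cast at ih₁ ⊢
      rw [add_sub_add_right_eq_sub, hSrec, sub_sub, ih₁, ih t ht,
        hE.eulerianChooseSum_succ_add_one ht]
end

section
/- Let γ_r be the Stirling coefficients defined by γ_0 = 1 and r·γ_r = Σ_{j=0}^{r-1} (B_{j+2}/(j+2)) γ_{r-1-j}. Then for all r ≥ 0, Σ_{j=0}^{r} (-1)^j (j+1) γ_{j+1} γ_{r-j} = B_{r+2}/(r+2). -/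
/-!
Put `G = ∑ γ_r X^r` and `b = ∑ B_{k+2}/(k+2) X^k`; the recurrence says `G' = b G`. Since `b` is
even, `(G(-X) G(X))' = -b G(-X) G(X) + G(-X) b G(X) = 0`, so `G(-X) G(X) = 1`. The identity is the
coefficient of `X^r` in `G'(-X) G(X) = b(-X) G(-X) G(X) = b(X)`.
-/

open PowerSeries

namespace PowerSeries

theorem derivative_rescale {R : Type*} [CommSemiring R] (a : R) (f : R⟦X⟧) :
    d⁄dX R (rescale a f) = C a * rescale a (d⁄dX R f) := by
  ext n
  simp only [coeff_derivative, coeff_rescale, coeff_C_mul, pow_succ]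
  ring

variable {R : Type*} [CommRing R] {G b : R⟦X⟧}

theorem rescale_neg_one_mul_self_eq_one_of_derivative_eq_mul [IsAddTorsionFree R]
    (hG : d⁄dX R G = b * G) (hb : rescale (-1) b = b) (hG0 : constantCoeff G = 1) :
    rescale (-1) G * G = 1 := by
  refine derivative.ext ?_ ?_
  · rw [Derivation.leibniz, derivative_rescale, hG, map_mul, hb, derivative_one, smul_eq_mul,
      smul_eq_mul, map_neg, map_one]
    ring
  · rw [map_mul, map_one, ← coeff_zero_eq_constantCoeff_apply, coeff_rescale, pow_zero, one_mul,
      coeff_zero_eq_constantCoeff_apply, hG0, one_mul]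

theorem rescale_neg_one_derivative_mul_self_of_derivative_eq_mul [IsAddTorsionFree R]
    (hG : d⁄dX R G = b * G) (hb : rescale (-1) b = b) (hG0 : constantCoeff G = 1) :
    rescale (-1) (d⁄dX R G) * G = b := by
  rw [hG, map_mul, hb, mul_assoc, rescale_neg_one_mul_self_eq_one_of_derivative_eq_mul hG hb hG0,
    mul_one]

end PowerSeries

noncomputable def stirlingLogDeriv : ℚ⟦X⟧ :=
  mk fun k => bernoulli' (k + 2) / (k + 2)

theorem rescale_neg_one_stirlingLogDeriv : rescale (-1) stirlingLogDeriv = stirlingLogDeriv := by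
  ext k
  rcases Nat.even_or_odd k with hk | hk
  · simp [stirlingLogDeriv, coeff_rescale, hk.neg_one_pow]
  · simp [stirlingLogDeriv, coeff_rescale,
      bernoulli'_eq_zero_of_odd (hk.add_even even_two) (by omega)]

theorem stmt5 (γ : ℕ → ℚ) (h0 : γ 0 = 1)
    (hrec : ∀ r : ℕ, 1 ≤ r →
      (r : ℚ) * γ r = ∑ j ∈ Finset.range r, bernoulli' (j + 2) / (j + 2) * γ (r - 1 - j))
    (r : ℕ) :
    ∑ j ∈ Finset.range (r + 1), (-1 : ℚ) ^ j * ((j : ℚ) + 1) * γ (j + 1) * γ (r - j)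
      = bernoulli' (r + 2) / (r + 2) := by
  have hG : d⁄dX ℚ (mk γ) = stirlingLogDeriv * mk γ := by
    ext n
    have hrec_succ := hrec (n + 1) n.succ_pos
    simp only [Nat.cast_succ, Nat.add_sub_cancel] at hrec_succ
    rw [coeff_derivative, coeff_mul, Finset.Nat.sum_antidiagonal_eq_sum_range_succ_mk, coeff_mk,
      mul_comm, hrec_succ]
    simp [stirlingLogDeriv]
  have key := congrArg (coeff r) (rescale_neg_one_derivative_mul_self_of_derivative_eq_mul hG
    rescale_neg_one_stirlingLogDeriv (by simp [h0]))
  rw [coeff_mul, Finset.Nat.sum_antidiagonal_eq_sum_range_succ_mk] at key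
  simpa [stirlingLogDeriv, coeff_rescale, coeff_derivative, mul_comm, mul_assoc, mul_left_comm]
    using key
end

section
/- Let (c_j)_{j≥0} be a sequence of reals with c_0 = 1 satisfying Σ_{x+y=n} x c_x c_y = n c_n + 2 c_{n-2} for all n ≥ 1 (with c_m = 0 for m < 0), and define S_n(k) = Σ_{j_1+...+j_k = n} c_{j_1}···c_{j_k} (sum over nonnegative integers). Then for all integers n ≥ 1 and k ≥ 1: S_n(k+1)/(k+1) = S_n(k)/k + (2/n) S_{n-2}(k). -/
/-!
Let `f = Σ c_j X^j` and `θ = X d/dX`. Then `S_n(k)` is the `n`-th coefficient of `f^k`, the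
recursion for `c` says exactly `θf · f = θf + 2X² f`, and `θ(f^(k+1)) = (k+1) f^k θf` gives
`S_n(k+1)/(k+1) = [X^n](f^k θf)/n`. Multiplying the first identity by `f^(k-1)` and taking
`n`-th coefficients yields the claim.
-/

/-- S_n(k) = Σ_{j_1+⋯+j_k = n} c_{j_1}⋯c_{j_k}. -/
def Sfun (c : ℕ → ℝ) (n k : ℕ) : ℝ :=
  ∑ p ∈ Finset.Nat.antidiagonalTuple k n, ∏ i, c (p i)

open PowerSeries Finset

theorem Finset.Nat.sum_antidiagonalTuple_succ {M : Type*} [AddCommMonoid M] (k n : ℕ)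
    (g : (Fin (k + 1) → ℕ) → M) :
    ∑ p ∈ antidiagonalTuple (k + 1) n, g p
      = ∑ q ∈ antidiagonal n, ∑ t ∈ antidiagonalTuple k q.2, g (Fin.cons q.1 t) := by
  rw [sum_sigma']
  refine sum_nbij' (fun p => ⟨(p 0, ∑ i, Fin.tail p i), Fin.tail p⟩)
    (fun q => Fin.cons q.1.1 q.2) ?_ ?_ (fun p _ => Fin.cons_self_tail p) ?_ ?_
  · intro p hp
    simp only [mem_sigma, HasAntidiagonal.mem_antidiagonal, Nat.mem_antidiagonalTuple,
      and_true] at hp ⊢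
    rw [← hp, Fin.sum_univ_succ]
    rfl
  · rintro ⟨⟨a, b⟩, t⟩ hq
    simp only [mem_sigma, HasAntidiagonal.mem_antidiagonal,
      Nat.mem_antidiagonalTuple] at hq ⊢
    rw [Fin.sum_univ_succ, Fin.cons_zero]
    simpa only [Fin.cons_succ, hq.2] using hq.1
  · rintro ⟨⟨a, b⟩, t⟩ hq
    simp only [mem_sigma, Nat.mem_antidiagonalTuple] at hq
    simp [hq.2]
  · intro p _
    simp only [Fin.cons_self_tail]

namespace PowerSeries

variable {R : Type*}

theorem coeff_mk_pow [CommSemiring R] (f : ℕ → R) (k n : ℕ) :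
    coeff n (mk f ^ k) = ∑ p ∈ Finset.Nat.antidiagonalTuple k n, ∏ i, f (p i) := by
  induction k generalizing n with
  | zero => cases n <;> simp
  | succ k ih =>
    rw [Finset.Nat.sum_antidiagonalTuple_succ, pow_succ', coeff_mul]
    refine sum_congr rfl fun q _ => ?_
    simp only [coeff_mk, ih, mul_sum, Fin.prod_univ_succ, Fin.cons_zero, Fin.cons_succ]

theorem coeff_X_mul_derivative [CommSemiring R] (f : R⟦X⟧) (n : ℕ) :
    coeff n (X * d⁄dX R f) = n * coeff n f := by
  cases n with
  | zero => simp
  | succ m => rw [coeff_succ_X_mul, coeff_derivative, mul_comm, Nat.cast_succ]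

theorem natCast_mul_coeff_pow_succ [CommSemiring R] (f : R⟦X⟧) (m n : ℕ) :
    n * coeff n (f ^ (m + 1)) = (m + 1) * coeff n (X * d⁄dX R f * f ^ m) := by
  have hθ : X * d⁄dX R (f ^ (m + 1)) = C ((m : R) + 1) * (X * d⁄dX R f * f ^ m) := by
    rw [derivative_pow, map_add, map_natCast, map_one, Nat.add_sub_cancel]
    push_cast
    ring
  rw [← coeff_X_mul_derivative, hθ, coeff_C_mul]

variable [Field R] [CharZero R]

theorem coeff_pow_succ_div (f : R⟦X⟧) (m : ℕ) {n : ℕ} (hn : n ≠ 0) :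
    coeff n (f ^ (m + 1)) / (m + 1) = coeff n (X * d⁄dX R f * f ^ m) / n := by
  rw [div_eq_div_iff (Nat.cast_add_one_ne_zero m) (Nat.cast_ne_zero.mpr hn), mul_comm,
    natCast_mul_coeff_pow_succ, mul_comm]

theorem coeff_pow_succ_div_eq_of_X_mul_derivative_mul_self {f g : R⟦X⟧}
    (h : X * d⁄dX R f * f = X * d⁄dX R f + g * f) {n k : ℕ} (hn : n ≠ 0) (hk : k ≠ 0) :
    coeff n (f ^ (k + 1)) / (k + 1) = coeff n (f ^ k) / k + coeff n (g * f ^ k) / n := by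
  obtain ⟨j, rfl⟩ := Nat.exists_eq_add_one_of_ne_zero hk
  have hmul : X * d⁄dX R f * f ^ (j + 1) = X * d⁄dX R f * f ^ j + g * f ^ (j + 1) := by
    rw [pow_succ', ← mul_assoc, h]
    ring
  rw [coeff_pow_succ_div _ _ hn, Nat.cast_add_one,
    coeff_pow_succ_div _ _ hn, hmul, map_add, add_div]

end PowerSeries

theorem X_mul_derivative_mk_mul_self (c : ℕ → ℝ)
    (hrec : ∀ n : ℕ, 1 ≤ n →
      ∑ p ∈ antidiagonal n, (p.1 : ℝ) * c p.1 * c p.2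
        = (n : ℝ) * c n + 2 * (if 2 ≤ n then c (n - 2) else 0)) :
    X * d⁄dX ℝ (PowerSeries.mk c) * PowerSeries.mk c
      = X * d⁄dX ℝ (PowerSeries.mk c) + C 2 * X ^ 2 * PowerSeries.mk c := by
  ext n
  rw [coeff_mul, map_add, mul_assoc, coeff_C_mul, coeff_X_pow_mul']
  simp only [coeff_X_mul_derivative, coeff_mk]
  rcases n with _ | m
  · simp
  · exact hrec (m + 1) m.succ_pos

theorem stmt8_general (c : ℕ → ℝ)
    (hrec : ∀ n : ℕ, 1 ≤ n →
      ∑ p ∈ Finset.HasAntidiagonal.antidiagonal n, (p.1 : ℝ) * c p.1 * c p.2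
        = (n : ℝ) * c n + 2 * (if 2 ≤ n then c (n - 2) else 0))
    (n k : ℕ) (hn : 1 ≤ n) (hk : 1 ≤ k) :
    Sfun c n (k + 1) / ((k : ℝ) + 1)
      = Sfun c n k / k + (2 / (n : ℝ)) * (if 2 ≤ n then Sfun c (n - 2) k else 0) := by
  simp only [Sfun, ← coeff_mk_pow]
  rw [coeff_pow_succ_div_eq_of_X_mul_derivative_mul_self (X_mul_derivative_mk_mul_self c hrec)
    (by omega) (by omega), mul_assoc, coeff_C_mul, coeff_X_pow_mul']
  split_ifs <;> ring

theorem stmt8 (c : ℕ → ℝ) (h0 : c 0 = 1)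
    (hrec : ∀ n : ℕ, 1 ≤ n →
      ∑ p ∈ Finset.HasAntidiagonal.antidiagonal n, (p.1 : ℝ) * c p.1 * c p.2
        = (n : ℝ) * c n + 2 * (if 2 ≤ n then c (n - 2) else 0))
    (n k : ℕ) (hn : 1 ≤ n) (hk : 1 ≤ k) :
    Sfun c n (k + 1) / ((k : ℝ) + 1)
      = Sfun c n k / k + (2 / (n : ℝ)) * (if 2 ≤ n then Sfun c (n - 2) k else 0) :=
  stmt8_general c hrec n k hn hk
end

section
/- For n ≥ 1 and 0 ≤ j ≤ n+1, the integral ∫_{-∞}^0 t(1-t)^{-1} F_j(t) F_{n+1-j}(t) dt equals (-1)^j ∫_{-∞}^0 t(1-t)^{-1} F_0(t) F_{n+1}(t) dt, where F_0(x)=1 and F_{m+1}(x) = d/dx[x/(1-x)·F_m(x)]. -/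
open MeasureTheory Set Filter Polynomial Topology

/-!
Write `G m t = t / (1 - t) * F m t`, so that the recursion reads `(G m)' = F (m + 1)` and
`(G a * G b)' = w * F (a + 1) * F b + w * F a * F (b + 1)` with weight `w t = t / (1 - t)`.
Since `F m = E_m / (1 - t) ^ (2 * m)` with `deg E_m ≤ m`, we have `|F m t| = O((1 - t) ^ (-m))`
on `(-∞, 0]`; hence for `a + b ≥ 1` the product `G a * G b` vanishes at `0` and at `-∞`, both
terms are integrable, and integrating by parts moves one index from one factor to the other at
the cost of a sign. Doing this `j` times gives `(-1) ^ j`.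
-/

lemma exists_abs_eval_le_mul_one_sub_pow (p : ℝ[X]) {n : ℕ} (hn : p.natDegree ≤ n) :
    ∃ C : ℝ, ∀ t ≤ (0 : ℝ), |p.eval t| ≤ C * (1 - t) ^ n := by
  refine ⟨∑ i ∈ Finset.range (p.natDegree + 1), |p.coeff i|, fun t ht => ?_⟩
  rw [eval_eq_sum_range, Finset.sum_mul]
  refine (Finset.abs_sum_le_sum_abs _ _).trans (Finset.sum_le_sum fun i hi => ?_)
  rw [abs_mul, abs_pow]
  have hi : i ≤ n := by have := Finset.mem_range.mp hi; omega
  gcongr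
  calc |t| ^ i ≤ (1 - t) ^ i := by gcongr; rw [abs_of_nonpos ht]; linarith
    _ ≤ (1 - t) ^ n := pow_le_pow_right₀ (by linarith) hi

lemma integrableOn_Iic_one_sub_rpow_neg_two :
    IntegrableOn (fun t : ℝ => (1 - t) ^ (-2 : ℝ)) (Iic 0) := by
  have hIoi : IntegrableOn (fun x : ℝ => (x + 1) ^ (-2 : ℝ)) (Ioi 0) :=
    integrableOn_add_rpow_Ioi_of_lt (by norm_num) (by norm_num)
  have hIci : IntegrableOn (fun x : ℝ => (x + 1) ^ (-2 : ℝ)) (Ici (-0)) := by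
    rw [neg_zero]
    exact (integrableOn_Ici_iff_integrableOn_Ioi (f := fun x : ℝ => (x + 1) ^ (-2 : ℝ))).mpr hIoi
  simpa [neg_add_eq_sub] using hIci.comp_neg_Iic

lemma integrableOn_Iic_of_abs_le_div_one_sub_sq {f : ℝ → ℝ} {C : ℝ}
    (hf : ContinuousOn f (Iic 0)) (hle : ∀ t ≤ (0 : ℝ), |f t| ≤ C / (1 - t) ^ 2) :
    IntegrableOn f (Iic 0) := by
  refine (integrableOn_Iic_one_sub_rpow_neg_two.const_mul C).mono'
    (hf.aestronglyMeasurable measurableSet_Iic) ?_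
  filter_upwards [ae_restrict_mem measurableSet_Iic] with t ht
  have hpos : (0 : ℝ) < 1 - t := by simp only [mem_Iic] at ht; linarith
  rw [Real.norm_eq_abs, Real.rpow_neg hpos.le, Real.rpow_two, ← div_eq_mul_inv]
  exact hle t ht

lemma tendsto_atBot_zero_of_abs_le_div_one_sub {f : ℝ → ℝ} {C : ℝ}
    (hle : ∀ t ≤ (0 : ℝ), |f t| ≤ C / (1 - t)) : Tendsto f atBot (𝓝 0) := by
  have hdiv : Tendsto (fun t : ℝ => C / (1 - t)) atBot (𝓝 0) :=
    tendsto_const_nhds.div_atTop (tendsto_atTop_add_const_left _ 1 tendsto_neg_atBot_atTop)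
  exact squeeze_zero_norm' (eventually_le_atBot 0 |>.mono hle) hdiv

lemma hasDerivAt_eval_div_one_sub_pow (p : ℝ[X]) (k : ℕ) {x : ℝ} (hx : x ≠ 1) :
    HasDerivAt (fun y => p.eval y / (1 - y) ^ (k + 1))
      ((derivative p * (1 - X) + C ((k : ℝ) + 1) * p).eval x / (1 - x) ^ (k + 2)) x := by
  have hne : 1 - x ≠ 0 := sub_ne_zero.mpr (Ne.symm hx)
  have hden : HasDerivAt (fun y : ℝ => (1 - y) ^ (k + 1)) ((k + 1 : ℕ) * (1 - x) ^ k * -1) x := by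
    simpa using ((hasDerivAt_id x).const_sub 1).fun_pow (k + 1)
  refine ((p.hasDerivAt x).fun_div hden (pow_ne_zero _ hne)).congr_deriv ?_
  simp only [eval_add, eval_mul, eval_sub, eval_one, eval_X, eval_C]
  field_simp
  push_cast
  ring

lemma natDegree_derivative_mul_one_sub_X_add_C_mul_le {R : Type*} [Ring R] (p : R[X]) (c : R) :
    (derivative p * (1 - X) + C c * p).natDegree ≤ p.natDegree := by
  refine natDegree_add_le_of_degree_le ?_ (natDegree_C_mul_le _ _)
  rcases Nat.eq_zero_or_pos p.natDegree with h | h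
  · simp [derivative_of_natDegree_zero h]
  · refine natDegree_mul_le_of_le (natDegree_derivative_le p)
      (n := 1) ((natDegree_sub_le _ _).trans (by simp [natDegree_X_le])) |>.trans ?_
    omega

lemma hasDerivAt_div_one_sub_mul {f : ℝ → ℝ} {p : ℝ[X]} {k : ℕ}
    (hf : ∀ y < 1, f y = p.eval y / (1 - y) ^ k) {x : ℝ} (hx : x < 1) :
    HasDerivAt (fun y => y / (1 - y) * f y)
      ((derivative (X * p) * (1 - X) + C ((k : ℝ) + 1) * (X * p)).eval x / (1 - x) ^ (k + 2))
      x := by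
  have heq : (fun y => y / (1 - y) * f y) =ᶠ[𝓝 x]
      fun y => (X * p).eval y / (1 - y) ^ (k + 1) := by
    filter_upwards [Iio_mem_nhds hx] with y hy
    rw [hf y hy, eval_mul, eval_X, div_mul_div_comm, pow_succ']
  exact (hasDerivAt_eval_div_one_sub_pow _ k hx.ne).congr_of_eventuallyEq heq

lemma abs_div_one_sub_le_one {t : ℝ} (ht : t ≤ 0) : |t / (1 - t)| ≤ 1 := by
  rw [abs_div, abs_of_nonpos ht, abs_of_pos (by linarith), div_le_one (by linarith)]
  linarith

structure IsEulerianSeq (F : ℕ → ℝ → ℝ) : Prop where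
  zero : ∀ x, F 0 x = 1
  succ : ∀ m x, F (m + 1) x = deriv (fun y => y / (1 - y) * F m y) x

namespace IsEulerianSeq

variable {F : ℕ → ℝ → ℝ}

lemma exists_eq_eval_div (hF : IsEulerianSeq F) (m : ℕ) :
    ∃ p : ℝ[X], p.natDegree ≤ m ∧ ∀ x < 1, F m x = p.eval x / (1 - x) ^ (2 * m) := by
  induction m with
  | zero => exact ⟨1, by simp, fun x _ => by simp [hF.zero]⟩
  | succ m ih =>
    obtain ⟨p, hdeg, hp⟩ := ih
    refine ⟨derivative (X * p) * (1 - X) + C ((2 * m : ℕ) + 1 : ℝ) * (X * p), ?_, fun x hx => ?_⟩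
    · refine (natDegree_derivative_mul_one_sub_X_add_C_mul_le _ _).trans ?_
      exact natDegree_mul_le_of_le natDegree_X_le hdeg |>.trans_eq (add_comm _ _)
    · rw [hF.succ, (hasDerivAt_div_one_sub_mul hp hx).deriv, mul_add_one]

lemma hasDerivAt (hF : IsEulerianSeq F) (m : ℕ) {x : ℝ} (hx : x < 1) :
    HasDerivAt (fun y => y / (1 - y) * F m y) (F (m + 1) x) x := by
  obtain ⟨p, -, hp⟩ := hF.exists_eq_eval_div m
  rw [hF.succ]
  exact (hasDerivAt_div_one_sub_mul hp hx).differentiableAt.hasDerivAt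

lemma continuousOn (hF : IsEulerianSeq F) (m : ℕ) : ContinuousOn (F m) (Iio 1) := by
  obtain ⟨p, -, hp⟩ := hF.exists_eq_eval_div m
  refine ContinuousOn.congr ?_ hp
  exact p.continuous.continuousOn.div (by fun_prop)
    fun x hx => pow_ne_zero _ (sub_ne_zero.mpr (ne_of_gt hx))

lemma exists_abs_le (hF : IsEulerianSeq F) (m : ℕ) :
    ∃ C : ℝ, ∀ t ≤ (0 : ℝ), |F m t| ≤ C / (1 - t) ^ m := by
  obtain ⟨p, hdeg, hp⟩ := hF.exists_eq_eval_div m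
  obtain ⟨C, hC⟩ := exists_abs_eval_le_mul_one_sub_pow p hdeg
  refine ⟨C, fun t ht => ?_⟩
  have hpos : 0 < 1 - t := by linarith
  rw [hp t (by linarith), abs_div, abs_of_pos (pow_pos hpos _),
    div_le_div_iff₀ (by positivity) (by positivity)]
  calc |p.eval t| * (1 - t) ^ m ≤ C * (1 - t) ^ m * (1 - t) ^ m := by gcongr; exact hC t ht
    _ = C * (1 - t) ^ (2 * m) := by ring

lemma exists_abs_mul_le (hF : IsEulerianSeq F) {a b k : ℕ} (hk : k ≤ a + b) :
    ∃ C : ℝ, ∀ t ≤ (0 : ℝ), |F a t * F b t| ≤ C / (1 - t) ^ k := by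
  obtain ⟨Ca, hCa⟩ := hF.exists_abs_le a
  obtain ⟨Cb, hCb⟩ := hF.exists_abs_le b
  have hCa₀ : 0 ≤ Ca := by simpa using (abs_nonneg _).trans (hCa 0 le_rfl)
  have hCb₀ : 0 ≤ Cb := by simpa using (abs_nonneg _).trans (hCb 0 le_rfl)
  refine ⟨Ca * Cb, fun t ht => ?_⟩
  have h1 : 1 ≤ 1 - t := by linarith
  calc |F a t * F b t| = |F a t| * |F b t| := abs_mul _ _
    _ ≤ Ca / (1 - t) ^ a * (Cb / (1 - t) ^ b) :=
        mul_le_mul (hCa t ht) (hCb t ht) (abs_nonneg _) ((abs_nonneg _).trans (hCa t ht))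
    _ = Ca * Cb / (1 - t) ^ (a + b) := by rw [div_mul_div_comm, pow_add]
    _ ≤ Ca * Cb / (1 - t) ^ k :=
        div_le_div_of_nonneg_left (by positivity) (by positivity) (pow_le_pow_right₀ h1 hk)

lemma integrableOn_mul (hF : IsEulerianSeq F) {a b : ℕ} (hab : 2 ≤ a + b) :
    IntegrableOn (fun t => t * (1 - t)⁻¹ * F a t * F b t) (Iic 0) := by
  obtain ⟨C, hC⟩ := hF.exists_abs_mul_le hab
  have hIic : Iic (0 : ℝ) ⊆ Iio 1 := Iic_subset_Iio.mpr zero_lt_one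
  have hne : ∀ t ∈ Iic (0 : ℝ), 1 - t ≠ 0 := fun t ht => sub_ne_zero.mpr (ne_of_gt (hIic ht))
  refine integrableOn_Iic_of_abs_le_div_one_sub_sq (C := C) ?_ fun t ht => ?_
  · exact ((continuousOn_id.mul ((continuousOn_const.sub continuousOn_id).inv₀ hne)).mul
      ((hF.continuousOn a).mono hIic)).mul ((hF.continuousOn b).mono hIic)
  · calc |t * (1 - t)⁻¹ * F a t * F b t| = |t / (1 - t)| * |F a t * F b t| := by
          rw [← abs_mul, div_eq_mul_inv, mul_assoc (t * _)]
      _ ≤ 1 * (C / (1 - t) ^ 2) :=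
          mul_le_mul (abs_div_one_sub_le_one ht) (hC t ht) (abs_nonneg _) zero_le_one
      _ = C / (1 - t) ^ 2 := one_mul _

lemma tendsto_mul_atBot (hF : IsEulerianSeq F) {a b : ℕ} (hab : 1 ≤ a + b) :
    Tendsto (fun t => t / (1 - t) * F a t * (t / (1 - t) * F b t)) atBot (𝓝 0) := by
  obtain ⟨C, hC⟩ := hF.exists_abs_mul_le hab
  refine tendsto_atBot_zero_of_abs_le_div_one_sub (C := C) fun t ht => ?_
  calc |t / (1 - t) * F a t * (t / (1 - t) * F b t)| = |t / (1 - t)| ^ 2 * |F a t * F b t| := by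
        rw [← abs_pow, ← abs_mul]; congr 1; ring
    _ ≤ 1 * (C / (1 - t) ^ 1) :=
        mul_le_mul (pow_le_one₀ (abs_nonneg _) (abs_div_one_sub_le_one ht)) (hC t ht)
          (abs_nonneg _) zero_le_one
    _ = C / (1 - t) := by rw [one_mul, pow_one]

lemma integral_succ_mul_eq_neg (hF : IsEulerianSeq F) {a b : ℕ} (hab : 1 ≤ a + b) :
    ∫ t in Iic 0, t * (1 - t)⁻¹ * F (a + 1) t * F b t
      = -∫ t in Iic 0, t * (1 - t)⁻¹ * F a t * F (b + 1) t := by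
  have hint₁ := hF.integrableOn_mul (a := a + 1) (b := b) (by omega)
  have hint₂ := hF.integrableOn_mul (a := a) (b := b + 1) (by omega)
  have hderiv : ∀ x ∈ Iic (0 : ℝ),
      HasDerivAt (fun t => t / (1 - t) * F a t * (t / (1 - t) * F b t))
        (x * (1 - x)⁻¹ * F (a + 1) x * F b x + x * (1 - x)⁻¹ * F a x * F (b + 1) x) x := by
    intro x hx
    have hx1 : x < 1 := lt_of_le_of_lt hx zero_lt_one
    exact ((hF.hasDerivAt a hx1).fun_mul (hF.hasDerivAt b hx1)).congr_deriv (by ring)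
  have hparts :=
    integral_Iic_of_hasDerivAt_of_tendsto' hderiv (hint₁.add hint₂) (hF.tendsto_mul_atBot hab)
  rw [integral_add hint₁ hint₂, zero_div, zero_mul, zero_mul, sub_zero] at hparts
  linarith

end IsEulerianSeq

theorem stmt13 (F : ℕ → ℝ → ℝ)
    (h0 : ∀ x : ℝ, F 0 x = 1)
    (hrec : ∀ (m : ℕ) (x : ℝ), F (m + 1) x = deriv (fun y => y / (1 - y) * F m y) x)
    (n : ℕ) (hn : 1 ≤ n) (j : ℕ) (hj : j ≤ n + 1) :
    ∫ t in Set.Iic (0 : ℝ), (t * (1 - t)⁻¹ * F j t * F (n + 1 - j) t)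
      = (-1 : ℝ) ^ j * ∫ t in Set.Iic (0 : ℝ), (t * (1 - t)⁻¹ * F 0 t * F (n + 1) t) := by
  have hF : IsEulerianSeq F := ⟨h0, hrec⟩
  induction j with
  | zero => simp
  | succ j ih =>
    rw [show n + 1 - (j + 1) = n - j by omega, hF.integral_succ_mul_eq_neg (by omega),
      show n - j + 1 = n + 1 - j by omega, ih (by omega), pow_succ]
    ring
end

section
/- Lagrange inversion: Let F be a formal power series over a field of characteristic zero with zero constant term and invertible linear coefficient, and let G be its compositional inverse. Then for all integers n ≥ 1 and r ≥ 1: n·[x^n] G(x)^r = r·[x^{n-r}] (x/F(x))^n. -/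
/-! Write `f ∘ F` for `f.subst F`. From `G ∘ F = X` we get `G ^ r ∘ F = X ^ r`, and the chain rule
gives `(G ^ r)' ∘ F * F' = r X ^ (r - 1)`. Multiply by `Q ^ n` and compare coefficients of
`X ^ (n - 1)`: the right side gives `r [X ^ (n - r)] Q ^ n`. On the left, since `F ^ j Q ^ j = X ^ j`,
`[X ^ (n - 1)] (F ^ j F' Q ^ n) = [X ^ t] (F' Q ^ (t + 1))` with `t = n - 1 - j`; this is `1` for
`t = 0`, and `0` for `t > 0` because `F' Q ^ (t + 1) = Q ^ t - X (Q ^ t)' / t` (differentiate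
`Q F = X`). So only `j = n - 1` survives and the left side is `[X ^ (n - 1)] (G ^ r)' = n [X ^ n] G ^ r`.
-/

open PowerSeries Finset

namespace PowerSeries

section CommRing

variable {K : Type*} [CommRing K] {F : K⟦X⟧}

lemma coeff_pow_eq_zero_of_lt (hF0 : constantCoeff F = 0) {k m : ℕ} (h : m < k) :
    coeff m (F ^ k) = 0 := by
  obtain ⟨g, rfl⟩ := X_dvd_iff.2 hF0
  rw [mul_pow, coeff_X_pow_mul', if_neg (not_le.2 h)]

lemma coeff_subst_eq_sum (hF0 : constantCoeff F = 0) (f : K⟦X⟧) {n M : ℕ} (h : n < M) :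
    coeff n (f.subst F) = ∑ k ∈ range M, coeff k f * coeff n (F ^ k) := by
  rw [coeff_subst' (.of_constantCoeff_zero' hF0)]
  refine finsum_eq_sum_of_support_subset _ fun k hk => mem_coe.2 (mem_range.2 ?_)
  by_contra! hMk
  exact hk (by simp only [coeff_pow_eq_zero_of_lt hF0 (h.trans_le hMk), smul_zero])

lemma coeff_subst_mul (hF0 : constantCoeff F = 0) (f W : K⟦X⟧) (m : ℕ) :
    coeff m (f.subst F * W) = ∑ k ∈ range (m + 1), coeff k f * coeff m (F ^ k * W) := by
  simp only [coeff_mul, mul_sum]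
  rw [sum_comm]
  refine sum_congr rfl fun p hp => ?_
  rw [coeff_subst_eq_sum hF0 f (M := m + 1) (by have := mem_antidiagonal.1 hp; omega), sum_mul]
  simp only [mul_assoc]

end CommRing

section Domain

variable {K : Type*} [CommRing K] [IsDomain K] [CharZero K]

lemma coeff_pow_mul_derivative (f : K⟦X⟧) (n : ℕ) :
    coeff n (f ^ n * d⁄dX K f) = coeff (n + 1) (f ^ (n + 1)) := by
  have h := coeff_derivative (f ^ (n + 1)) n
  rw [Derivation.leibniz_pow, Nat.add_sub_cancel, nsmul_eq_mul, smul_eq_mul, ← map_natCast C,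
    coeff_C_mul, mul_comm] at h
  exact mul_right_cancel₀ (Nat.cast_ne_zero.2 n.succ_ne_zero) (by exact_mod_cast h)

variable {F Q : K⟦X⟧}

lemma coeff_derivative_mul_pow_succ (hF0 : constantCoeff F = 0) (hQ : Q * F = X) (t : ℕ) :
    coeff t (d⁄dX K F * Q ^ (t + 1)) = if t = 0 then 1 else 0 := by
  cases t with
  | zero =>
    have h1 := congrArg (coeff 1) hQ
    rw [coeff_mul, Nat.sum_antidiagonal_eq_sum_range_succ_mk] at h1
    simp only [sum_range_succ, sum_range_zero, Nat.sub_zero, Nat.sub_self,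
      coeff_zero_eq_constantCoeff_apply, hF0, mul_zero, zero_add, add_zero, coeff_one_X] at h1
    rw [if_pos rfl, zero_add, pow_one, coeff_zero_eq_constantCoeff_apply, map_mul,
      ← coeff_zero_eq_constantCoeff_apply, coeff_derivative]
    simpa [mul_comm] using h1
  | succ u =>
    have hd : Q * d⁄dX K F + F * d⁄dX K Q = 1 := by
      simpa [Derivation.leibniz, add_comm] using congrArg (d⁄dX K) hQ
    have e : d⁄dX K F * Q ^ (u + 2) = Q ^ (u + 1) - X * (Q ^ u * d⁄dX K Q) := by
      linear_combination Q ^ (u + 1) * hd - Q ^ u * d⁄dX K Q * hQ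
    rw [e, map_sub, coeff_succ_X_mul, coeff_pow_mul_derivative, sub_self, if_neg u.succ_ne_zero]

lemma coeff_pow_mul_derivative_mul_pow_succ (hF0 : constantCoeff F = 0) (hQ : Q * F = X)
    {j m : ℕ} (hj : j ≤ m) :
    coeff m (F ^ j * (d⁄dX K F * Q ^ (m + 1))) = if j = m then 1 else 0 := by
  obtain ⟨t, rfl⟩ := Nat.exists_eq_add_of_le hj
  have h : F ^ j * (d⁄dX K F * Q ^ (j + t + 1)) = X ^ j * (d⁄dX K F * Q ^ (t + 1)) := by
    rw [← hQ]; ring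
  rw [h, add_comm j t, coeff_X_pow_mul, coeff_derivative_mul_pow_succ hF0 hQ]
  simp

lemma coeff_subst_mul_derivative_mul_pow_succ (hF0 : constantCoeff F = 0) (hQ : Q * F = X)
    (f : K⟦X⟧) (m : ℕ) :
    coeff m (f.subst F * (d⁄dX K F * Q ^ (m + 1))) = coeff m f := by
  rw [coeff_subst_mul hF0, sum_eq_single_of_mem m (self_mem_range_succ m) fun j hj hjm => ?_,
    coeff_pow_mul_derivative_mul_pow_succ hF0 hQ le_rfl, if_pos rfl, mul_one]
  rw [coeff_pow_mul_derivative_mul_pow_succ hF0 hQ (mem_range_succ_iff.1 hj), if_neg hjm,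
    mul_zero]

end Domain

end PowerSeries

theorem stmt19_general {K : Type*} [Field K] [CharZero K]
    (F G Q : PowerSeries K)
    (hF0 : PowerSeries.constantCoeff F = 0)
    (hGF : ∀ n : ℕ, ∑ k ∈ Finset.range (n + 1),
        PowerSeries.coeff k G * PowerSeries.coeff n (F ^ k)
        = PowerSeries.coeff n (PowerSeries.X : PowerSeries K))
    (hQ : Q * F = PowerSeries.X)
    (n r : ℕ) :
    (n : K) * PowerSeries.coeff n (G ^ r)
      = (r : K) * (if r ≤ n then PowerSeries.coeff (n - r) (Q ^ n) else 0) := by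
  have hF : HasSubst F := .of_constantCoeff_zero' hF0
  have hG : G.subst F = X := ext fun n => (coeff_subst_eq_sum hF0 G n.lt_succ_self).trans (hGF n)
  rcases n with _ | m
  · rcases r with _ | r <;> simp
  rcases r with _ | r
  · simp
  have chain : (d⁄dX K (G ^ (r + 1))).subst F * d⁄dX K F = C ((r + 1 : ℕ) : K) * X ^ r := by
    rw [← derivative_subst hF, subst_pow hF, hG, Derivation.leibniz_pow, derivative_X,
      smul_eq_mul, mul_one, nsmul_eq_mul, map_natCast, Nat.add_sub_cancel]
  have key := congrArg (fun f => coeff m (f * Q ^ (m + 1))) chain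
  simp only [mul_assoc, coeff_subst_mul_derivative_mul_pow_succ hF0 hQ, coeff_derivative,
    coeff_C_mul, coeff_X_pow_mul'] at key
  simp only [Nat.add_le_add_iff_right, Nat.add_sub_add_right]
  push_cast at key ⊢
  rw [mul_comm, key]

/-- Lagrange inversion: if G is the compositional inverse of F (a power series
with zero constant term and nonzero linear coefficient, composition written
coefficient-wise) and Q = x/F(x), i.e. Q·F = x, then
n·[x^n] G^r = r·[x^{n-r}] Q^n for n, r ≥ 1 (the coefficient at a negative
index being zero). -/
theorem stmt19 {K : Type*} [Field K] [CharZero K]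
    (F G Q : PowerSeries K)
    (hF0 : PowerSeries.constantCoeff F = 0)
    (hF1 : PowerSeries.coeff 1 F ≠ 0)
    (hG0 : PowerSeries.constantCoeff G = 0)
    (hFG : ∀ n : ℕ, ∑ k ∈ Finset.range (n + 1),
        PowerSeries.coeff k F * PowerSeries.coeff n (G ^ k)
        = PowerSeries.coeff n (PowerSeries.X : PowerSeries K))
    (hGF : ∀ n : ℕ, ∑ k ∈ Finset.range (n + 1),
        PowerSeries.coeff k G * PowerSeries.coeff n (F ^ k)
        = PowerSeries.coeff n (PowerSeries.X : PowerSeries K))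
    (hQ : Q * F = PowerSeries.X)
    (n r : ℕ) (hn : 1 ≤ n) (hr : 1 ≤ r) :
    (n : K) * PowerSeries.coeff n (G ^ r)
      = (r : K) * (if r ≤ n then PowerSeries.coeff (n - r) (Q ^ n) else 0) :=
  stmt19_general F G Q hF0 hGF hQ n r
end
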